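/- (Fourier mass on low-dimensional irreps from large U² norm) Let G be a finite group and f : G → U_t with ‖f‖_{U²}⁴ ≥ η·t for some η > 0. Then for any integer D > 1, max over irreducible representations ρ of G with d_ρ < D of ‖f̂(ρ)‖²_HS is at least η − t/D. In particular, taking D = ⌈2t/η⌉, there exists an irrep ρ with d_ρ < 2t/η and ‖f̂(ρ)‖²_HS ≥ η/2. -/

import Mathlib

open scoped Kronecker ComplexOrder
open Finset Matrix

attribute [local instance] Classical.propDecidable

noncomputable section

def hsNormSq {m n : Type*} [Fintype m] [Fintype n] (A : Matrix m n ℂ) : ℝ :=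
  ∑ i, ∑ j, Complex.normSq (A i j)

def vnorm {n : ℕ} (u : Fin n → ℂ) : ℝ := Real.sqrt (∑ i, Complex.normSq (u i))

def opNorm {d : ℕ} (M : Matrix (Fin d) (Fin d) ℂ) : ℝ :=
  ‖Matrix.toEuclideanCLM (𝕜 := ℂ) M‖

def traceNorm {m : Type*} [Fintype m] [DecidableEq m] (A : Matrix m m ℂ) : ℝ :=
  ((Matrix.posSemidef_conjTranspose_mul_self A).1.eigenvectorUnitary.1 *
    diagonal (((↑) : ℝ → ℂ) ∘ Real.sqrt ∘ (Matrix.posSemidef_conjTranspose_mul_self A).1.eigenvalues) *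
    (star (Matrix.posSemidef_conjTranspose_mul_self A).1.eigenvectorUnitary : Matrix m m ℂ)).trace.re

variable {G : Type*} [Group G] [Fintype G]

def conv {t : ℕ} (f g : G → Matrix (Fin t) (Fin t) ℂ) (x : G) : Matrix (Fin t) (Fin t) ℂ :=
  (Fintype.card G : ℂ)⁻¹ • ∑ y, f (x * y⁻¹) * g y

def adjFun {t : ℕ} (f : G → Matrix (Fin t) (Fin t) ℂ) (x : G) : Matrix (Fin t) (Fin t) ℂ :=
  (f x⁻¹)ᴴ

def fourierMat {t d : ℕ} (f : G → Matrix (Fin t) (Fin t) ℂ)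
    (ρ : G →* Matrix.unitaryGroup (Fin d) ℂ) : Matrix (Fin t × Fin d) (Fin t × Fin d) ℂ :=
  (Fintype.card G : ℂ)⁻¹ • ∑ x, (f x) ⊗ₖ (ρ x : Matrix (Fin d) (Fin d) ℂ)

def l2sq {t : ℕ} (f : G → Matrix (Fin t) (Fin t) ℂ) : ℝ :=
  (Fintype.card G : ℝ)⁻¹ * ∑ x, hsNormSq (f x)

def u2pow4 {t : ℕ} (f : G → Matrix (Fin t) (Fin t) ℂ) : ℝ := l2sq (conv (adjFun f) f)

def IsIrred {d : ℕ} (ρ : G →* Matrix.unitaryGroup (Fin d) ℂ) : Prop :=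
  ∀ M : Matrix (Fin d) (Fin d) ℂ,
    (∀ g, (ρ g : Matrix (Fin d) (Fin d) ℂ) * M = M * (ρ g : Matrix (Fin d) (Fin d) ℂ)) →
    ∃ c : ℂ, M = c • (1 : Matrix (Fin d) (Fin d) ℂ)

def IsNontrivialRep {d : ℕ} (ρ : G →* Matrix.unitaryGroup (Fin d) ℂ) : Prop :=
  ∃ g, (ρ g : Matrix (Fin d) (Fin d) ℂ) ≠ 1

def IsBiased (S : Finset G) (ε : ℝ) : Prop :=
  S.Nonempty ∧ ∀ (d : ℕ) (ρ : G →* Matrix.unitaryGroup (Fin d) ℂ),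
    IsIrred ρ → IsNontrivialRep ρ →
    opNorm ((S.card : ℂ)⁻¹ • ∑ s ∈ S, (ρ s : Matrix (Fin d) (Fin d) ℂ)) ≤ ε

def Tmat (f : G → ℂ) : Matrix G G ℂ := fun x y => f (x⁻¹ * y) / (Fintype.card G : ℂ)

/-!
Write `S ρ = ‖f̂(ρ)‖²_HS`. The Schur orthogonality relations say that the matrix coefficients of
a complete family of irreducibles, suitably normalised, form a matrix with orthonormal rows; it is
square because `∑ d_ρ² = |G|`, so its columns are orthonormal too, and this is Parseval:
`∑ d_ρ S ρ = ‖f‖₂² = t`. Since the Fourier transform of `f* ∗ f` is `f̂*f̂`, Parseval and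
submultiplicativity of the Hilbert–Schmidt norm also give `η t ≤ ‖f‖_{U²}⁴ ≤ ∑ d_ρ (S ρ)²`.
If `d_ρ ≥ D` then `S ρ ≤ t / d_ρ ≤ t / D`; otherwise `S ρ ≤ M`, the largest mass on irreducibles
of dimension `< D` (the trivial representation is one). Hence `η t ≤ (M + t / D) ∑ d_ρ S ρ`.
-/

section HilbertSchmidt

variable {l m n : Type*} [Fintype l] [Fintype m] [Fintype n]

lemma hsNormSq_nonneg (A : Matrix m n ℂ) : 0 ≤ hsNormSq A :=
  sum_nonneg fun _ _ => sum_nonneg fun _ _ => Complex.normSq_nonneg _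

lemma ofReal_hsNormSq (A : Matrix m n ℂ) : (hsNormSq A : ℂ) = (Aᴴ * A).trace := by
  simp only [hsNormSq, trace, diag_apply, mul_apply, conjTranspose_apply, Complex.ofReal_sum,
    Complex.normSq_eq_conj_mul_self]
  exact sum_comm

attribute [local instance] Matrix.frobeniusSeminormedAddCommGroup

lemma hsNormSq_eq_frobenius_norm_sq (A : Matrix m n ℂ) : hsNormSq A = ‖A‖ ^ 2 := by
  rw [frobenius_norm_def, ← Real.rpow_natCast, ← Real.rpow_mul (by positivity)]
  norm_num [hsNormSq, Complex.sq_norm]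

lemma hsNormSq_mul_le (A : Matrix l m ℂ) (B : Matrix m n ℂ) :
    hsNormSq (A * B) ≤ hsNormSq A * hsNormSq B := by
  simp only [hsNormSq_eq_frobenius_norm_sq, ← mul_pow]
  exact pow_le_pow_left₀ (norm_nonneg _) (frobenius_norm_mul A B) 2

lemma hsNormSq_conjTranspose (A : Matrix m n ℂ) : hsNormSq Aᴴ = hsNormSq A := by
  simp only [hsNormSq_eq_frobenius_norm_sq, frobenius_norm_conjTranspose]

lemma hsNormSq_conjTranspose_mul_self_le (A : Matrix m n ℂ) :
    hsNormSq (Aᴴ * A) ≤ hsNormSq A ^ 2 := by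
  simpa [sq, hsNormSq_conjTranspose] using hsNormSq_mul_le Aᴴ A

lemma hsNormSq_of_mem_unitaryGroup {n : Type*} [Fintype n] [DecidableEq n] {U : Matrix n n ℂ}
    (hU : U ∈ unitaryGroup n ℂ) : hsNormSq U = Fintype.card n := by
  apply Complex.ofReal_injective
  rw [ofReal_hsNormSq, ← star_eq_conjTranspose, (mem_unitaryGroup_iff'.mp hU), trace_one]
  simp

end HilbertSchmidt

lemma l2sq_of_mem_unitaryGroup {t : ℕ} {f : G → Matrix (Fin t) (Fin t) ℂ}
    (hf : ∀ x, f x ∈ unitaryGroup (Fin t) ℂ) : l2sq f = t := by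
  simp [l2sq, hsNormSq_of_mem_unitaryGroup (hf _)]

section UnitaryRep

variable {d : ℕ} (ρ : G →* unitaryGroup (Fin d) ℂ)

omit [Fintype G] in
@[simp]
lemma coe_map_inv_eq_conjTranspose (x : G) :
    (ρ x⁻¹ : Matrix (Fin d) (Fin d) ℂ) = (ρ x : Matrix (Fin d) (Fin d) ℂ)ᴴ := by
  simp [star_eq_conjTranspose]

omit [Fintype G] in
@[simp]
lemma conjTranspose_coe_mul_coe (x : G) :
    (ρ x : Matrix (Fin d) (Fin d) ℂ)ᴴ * ρ x = 1 := by
  rw [← star_eq_conjTranspose]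
  exact UnitaryGroup.star_mul_self _

lemma coe_mul_sum_coe (g : G) :
    (ρ g : Matrix (Fin d) (Fin d) ℂ) * ∑ x, (ρ x : Matrix (Fin d) (Fin d) ℂ)
      = ∑ x, (ρ x : Matrix (Fin d) (Fin d) ℂ) := by
  rw [Matrix.mul_sum]
  exact Fintype.sum_equiv (Equiv.mulLeft g) _ _ fun x => by simp

lemma sum_coe_mul_coe (g : G) :
    (∑ x, (ρ x : Matrix (Fin d) (Fin d) ℂ)) * ρ g = ∑ x, (ρ x : Matrix (Fin d) (Fin d) ℂ) := by
  rw [Matrix.sum_mul]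
  exact Fintype.sum_equiv (Equiv.mulRight g) _ _ fun x => by simp

variable {ρ}

lemma IsIrred.coe_eq_one_of_sum_ne_zero (hρ : IsIrred ρ)
    (hsum : ∑ x, (ρ x : Matrix (Fin d) (Fin d) ℂ) ≠ 0) (g : G) :
    (ρ g : Matrix (Fin d) (Fin d) ℂ) = 1 := by
  obtain ⟨c, hc⟩ := hρ _ fun g => (coe_mul_sum_coe ρ g).trans (sum_coe_mul_coe ρ g).symm
  have hc0 : c ≠ 0 := by rintro rfl; simp [hc] at hsum
  have := coe_mul_sum_coe ρ g
  rw [hc, Matrix.mul_smul, Matrix.mul_one] at this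
  exact smul_right_injective _ hc0 this

omit [Fintype G] in
lemma IsIrred.dim_le_one_of_forall_coe_eq_one (hρ : IsIrred ρ)
    (htriv : ∀ g, (ρ g : Matrix (Fin d) (Fin d) ℂ) = 1) : d ≤ 1 := by
  by_contra! hd
  obtain ⟨a, b, hab⟩ := Fintype.exists_pair_of_one_lt_card (α := Fin d) (by simpa using hd)
  obtain ⟨c, hc⟩ := hρ (single a b 1) fun g => by simp [htriv g]
  simpa [one_apply_ne hab] using congrFun (congrFun hc a) b

end UnitaryRep

section FourierAlgebra

lemma sum_kronecker {ι l m p q : Type*} (s : Finset ι) (A : ι → Matrix l m ℂ) (B : Matrix p q ℂ) :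
    (∑ i ∈ s, A i) ⊗ₖ B = ∑ i ∈ s, A i ⊗ₖ B := by
  ext
  simp [kroneckerMap_apply, Matrix.sum_apply, Finset.sum_mul]

omit [Group G] in
lemma star_inv_card : star (Fintype.card G : ℂ)⁻¹ = (Fintype.card G : ℂ)⁻¹ := by
  simp

variable {t d : ℕ} (ρ : G →* unitaryGroup (Fin d) ℂ)

lemma fourierMat_conv (f g : G → Matrix (Fin t) (Fin t) ℂ) :
    fourierMat (conv f g) ρ = fourierMat f ρ * fourierMat g ρ := by
  have reindex : ∀ y, ∑ z, (f z * g y)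
        ⊗ₖ ((ρ z : Matrix (Fin d) (Fin d) ℂ) * (ρ y : Matrix (Fin d) (Fin d) ℂ))
      = ∑ x, (f (x * y⁻¹) * g y) ⊗ₖ (ρ x : Matrix (Fin d) (Fin d) ℂ) := by
    intro y
    rw [← Equiv.sum_comp (Equiv.mulRight y)
      (fun x => (f (x * y⁻¹) * g y) ⊗ₖ (ρ x : Matrix (Fin d) (Fin d) ℂ))]
    simp only [Equiv.coe_mulRight, mul_inv_cancel_right, map_mul, UnitaryGroup.mul_val]
  simp only [fourierMat, conv, smul_kronecker, sum_kronecker, ← smul_sum, smul_mul_smul,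
    sum_mul_sum, ← mul_kronecker_mul]
  rw [smul_smul, sum_comm]
  simp only [← reindex]
  rw [sum_comm]

lemma fourierMat_adjFun (f : G → Matrix (Fin t) (Fin t) ℂ) :
    fourierMat (adjFun f) ρ = (fourierMat f ρ)ᴴ := by
  simp only [fourierMat, adjFun, conjTranspose_smul, star_inv_card, conjTranspose_sum,
    conjTranspose_kronecker]
  congr 1
  exact (Equiv.sum_comp (Equiv.inv G) _).symm.trans (by simp [star_eq_conjTranspose])

lemma trace_conjTranspose_fourierMat_mul_self (F : G → Matrix (Fin t) (Fin t) ℂ) :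
    ((fourierMat F ρ)ᴴ * fourierMat F ρ).trace
      = (Fintype.card G : ℂ)⁻¹ ^ 2 * ∑ x, ∑ y, ((F x)ᴴ * F y).trace
          * ((ρ x : Matrix (Fin d) (Fin d) ℂ)ᴴ * (ρ y : Matrix (Fin d) (Fin d) ℂ)).trace := by
  simp only [fourierMat, conjTranspose_smul, star_inv_card, conjTranspose_sum,
    conjTranspose_kronecker, smul_mul_smul, sum_mul_sum, trace_smul, trace_sum,
    ← mul_kronecker_mul, trace_kronecker, smul_eq_mul, sq]

end FourierAlgebra

section SchurOrthogonality

lemma mul_single_one_mul_apply {l m n o : Type*} [Fintype m] [Fintype n] [DecidableEq m]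
    [DecidableEq n] (M : Matrix l m ℂ) (N : Matrix n o ℂ) (e : m) (e' : n) (b : l) (c : o) :
    (M * single e e' (1 : ℂ) * N) b c = M b e * N e' c := by
  simp [mul_apply, single_apply, ite_and]

variable {d₁ d₂ : ℕ}

def twirl (ρ₁ : G →* unitaryGroup (Fin d₁) ℂ) (ρ₂ : G →* unitaryGroup (Fin d₂) ℂ)
    (E : Matrix (Fin d₁) (Fin d₂) ℂ) : Matrix (Fin d₁) (Fin d₂) ℂ :=
  ∑ x, (ρ₁ x : Matrix (Fin d₁) (Fin d₁) ℂ) * E * (ρ₂ x : Matrix (Fin d₂) (Fin d₂) ℂ)ᴴ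

lemma coe_mul_twirl (ρ₁ : G →* unitaryGroup (Fin d₁) ℂ) (ρ₂ : G →* unitaryGroup (Fin d₂) ℂ)
    (E : Matrix (Fin d₁) (Fin d₂) ℂ) (g : G) :
    (ρ₁ g : Matrix (Fin d₁) (Fin d₁) ℂ) * twirl ρ₁ ρ₂ E
      = twirl ρ₁ ρ₂ E * (ρ₂ g : Matrix (Fin d₂) (Fin d₂) ℂ) := by
  rw [twirl, Matrix.sum_mul, Matrix.mul_sum]
  refine Fintype.sum_equiv (Equiv.mulLeft g) _ _ fun x => ?_
  simp [conjTranspose_mul, Matrix.mul_assoc]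

lemma trace_twirl_self (ρ₁ : G →* unitaryGroup (Fin d₁) ℂ) (E : Matrix (Fin d₁) (Fin d₁) ℂ) :
    (twirl ρ₁ ρ₁ E).trace = Fintype.card G * E.trace := by
  simp [twirl, trace_sum, trace_mul_cycle _ E]

lemma IsIrred.twirl_self_eq {ρ₁ : G →* unitaryGroup (Fin d₁) ℂ} (hρ : IsIrred ρ₁)
    (hd : 0 < d₁) (E : Matrix (Fin d₁) (Fin d₁) ℂ) :
    twirl ρ₁ ρ₁ E = (Fintype.card G * E.trace / d₁) • 1 := by
  obtain ⟨c, hc⟩ := hρ _ (coe_mul_twirl ρ₁ ρ₁ E)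
  have htrace := trace_twirl_self ρ₁ E
  rw [hc, trace_smul, trace_one, Fintype.card_fin, smul_eq_mul] at htrace
  rw [hc, ← htrace, mul_div_cancel_right₀ _ (by exact_mod_cast hd.ne')]

variable {I : Type*} {d : I → ℕ}

def coeffMat (ρ : ∀ i, G →* unitaryGroup (Fin (d i)) ℂ) :
    Matrix (Σ i, Fin (d i) × Fin (d i)) G ℂ :=
  fun s x => (ρ s.1 x : Matrix (Fin (d s.1)) (Fin (d s.1)) ℂ) s.2.1 s.2.2

lemma coeffMat_mul_conjTranspose_apply (ρ : ∀ i, G →* unitaryGroup (Fin (d i)) ℂ)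
    (s s' : Σ i, Fin (d i) × Fin (d i)) :
    (coeffMat ρ * (coeffMat ρ)ᴴ) s s'
      = twirl (ρ s.1) (ρ s'.1) (single s.2.2 s'.2.2 1) s.2.1 s'.2.1 := by
  simp only [twirl, Matrix.sum_apply, mul_single_one_mul_apply]
  simp [coeffMat, mul_apply]

lemma coeffMat_mul_conjTranspose (ρ : ∀ i, G →* unitaryGroup (Fin (d i)) ℂ)
    (hpos : ∀ i, 0 < d i) (hirr : ∀ i, IsIrred (ρ i))
    (hdisj : ∀ i j, i ≠ j → ∀ M : Matrix (Fin (d i)) (Fin (d j)) ℂ,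
      (∀ g, (ρ i g : Matrix (Fin (d i)) (Fin (d i)) ℂ) * M
          = M * (ρ j g : Matrix (Fin (d j)) (Fin (d j)) ℂ)) → M = 0) :
    coeffMat ρ * (coeffMat ρ)ᴴ = diagonal fun s => (Fintype.card G / d s.1 : ℂ) := by
  ext ⟨i, b, e⟩ ⟨j, c, e'⟩
  rw [coeffMat_mul_conjTranspose_apply]
  by_cases hij : i = j
  · subst hij
    rw [(hirr i).twirl_self_eq (hpos i)]
    by_cases he : e = e' <;> by_cases hb : b = c <;>
      simp [he, hb, one_apply, trace_single_eq_of_ne]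
  · rw [hdisj i j hij _ (coe_mul_twirl _ _ _), diagonal_apply_ne _ (by simp [hij])]
    rfl

end SchurOrthogonality

structure IsCompleteIrrepFamily {I : Type*} [Fintype I] {d : I → ℕ}
    (ρ : ∀ i, G →* unitaryGroup (Fin (d i)) ℂ) : Prop where
  dim_pos : ∀ i, 0 < d i
  irred : ∀ i, IsIrred (ρ i)
  inequiv : ∀ i j, i ≠ j → ∀ M : Matrix (Fin (d i)) (Fin (d j)) ℂ,
    (∀ g, (ρ i g : Matrix (Fin (d i)) (Fin (d i)) ℂ) * M
      = M * (ρ j g : Matrix (Fin (d j)) (Fin (d j)) ℂ)) → M = 0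
  sum_dim_sq : ∑ i, d i ^ 2 = Fintype.card G

namespace IsCompleteIrrepFamily

variable {I : Type*} [Fintype I] {d : I → ℕ} {ρ : ∀ i, G →* unitaryGroup (Fin (d i)) ℂ}

lemma conjTranspose_coeffMat_mul_diagonal_mul (hρ : IsCompleteIrrepFamily ρ) :
    (coeffMat ρ)ᴴ * diagonal (fun s : Σ i, Fin (d i) × Fin (d i) => (d s.1 / Fintype.card G : ℂ))
      * coeffMat ρ = 1 := by
  have hcard : Fintype.card (Σ i, Fin (d i) × Fin (d i)) = Fintype.card G := by
    simp [Fintype.card_sigma, ← hρ.sum_dim_sq, sq]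
  refine (mul_eq_one_comm_of_card_eq _ _ ℂ hcard).mp ?_
  rw [← Matrix.mul_assoc, coeffMat_mul_conjTranspose ρ hρ.dim_pos hρ.irred hρ.inequiv,
    diagonal_mul_diagonal, ← diagonal_one]
  congr 1
  ext s
  have : (d s.1 : ℂ) ≠ 0 := by exact_mod_cast (hρ.dim_pos s.1).ne'
  field_simp

lemma sum_dim_mul_trace (hρ : IsCompleteIrrepFamily ρ) (x y : G) :
    ∑ i, (d i : ℂ) * ((ρ i x : Matrix (Fin (d i)) (Fin (d i)) ℂ)ᴴ
        * (ρ i y : Matrix (Fin (d i)) (Fin (d i)) ℂ)).trace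
      = if x = y then (Fintype.card G : ℂ) else 0 := by
  have hG : (Fintype.card G : ℂ) ≠ 0 := Nat.cast_ne_zero.mpr Fintype.card_ne_zero
  calc _ = Fintype.card G * ((coeffMat ρ)ᴴ
          * diagonal (fun s : Σ i, Fin (d i) × Fin (d i) => (d s.1 / Fintype.card G : ℂ))
          * coeffMat ρ) x y := by
        rw [mul_apply]
        simp only [mul_diagonal]
        simp only [Fintype.sum_sigma, Fintype.sum_prod_type, mul_sum, trace,
          diag_apply, mul_apply, conjTranspose_apply, coeffMat]
        refine sum_congr rfl fun i _ => ?_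
        rw [sum_comm]
        refine sum_congr rfl fun a _ => sum_congr rfl fun b _ => ?_
        field_simp
    _ = if x = y then (Fintype.card G : ℂ) else 0 := by
        rw [hρ.conjTranspose_coeffMat_mul_diagonal_mul, one_apply]
        split_ifs <;> simp

lemma sum_dim_mul_hsNormSq_fourierMat (hρ : IsCompleteIrrepFamily ρ) {t : ℕ}
    (F : G → Matrix (Fin t) (Fin t) ℂ) :
    ∑ i, (d i : ℝ) * hsNormSq (fourierMat F (ρ i)) = l2sq F := by
  apply Complex.ofReal_injective
  push_cast [l2sq, ofReal_hsNormSq, trace_conjTranspose_fourierMat_mul_self]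
  calc _ = (Fintype.card G : ℂ)⁻¹ ^ 2 * ∑ x, ∑ y, ((F x)ᴴ * F y).trace
          * ∑ i, (d i : ℂ) * ((ρ i x : Matrix (Fin (d i)) (Fin (d i)) ℂ)ᴴ
            * (ρ i y : Matrix (Fin (d i)) (Fin (d i)) ℂ)).trace := by
        simp only [mul_sum]
        rw [sum_comm]
        refine sum_congr rfl fun x _ => ?_
        rw [sum_comm]
        exact sum_congr rfl fun y _ => sum_congr rfl fun i _ => by ring
    _ = (Fintype.card G : ℂ)⁻¹ * ∑ x, ((F x)ᴴ * F x).trace := by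
        have hG : (Fintype.card G : ℂ) ≠ 0 := Nat.cast_ne_zero.mpr Fintype.card_ne_zero
        simp only [hρ.sum_dim_mul_trace, mul_ite, mul_zero, sum_ite_eq, mem_univ, if_true, mul_sum]
        exact sum_congr rfl fun x _ => by field_simp

lemma u2pow4_le_sum_dim_mul_sq (hρ : IsCompleteIrrepFamily ρ) {t : ℕ}
    (f : G → Matrix (Fin t) (Fin t) ℂ) :
    u2pow4 f ≤ ∑ i, (d i : ℝ) * hsNormSq (fourierMat f (ρ i)) ^ 2 := by
  rw [u2pow4, ← hρ.sum_dim_mul_hsNormSq_fourierMat]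
  refine sum_le_sum fun i _ => mul_le_mul_of_nonneg_left ?_ (Nat.cast_nonneg _)
  rw [fourierMat_conv, fourierMat_adjFun]
  exact hsNormSq_conjTranspose_mul_self_le _


lemma exists_dim_eq_one (hρ : IsCompleteIrrepFamily ρ) : ∃ i, d i = 1 := by
  have hsum : ∑ i, (d i : ℂ) * (∑ x, (ρ i x : Matrix (Fin (d i)) (Fin (d i)) ℂ)).trace
      = Fintype.card G := by
    simpa [trace_sum, mul_sum, sum_comm (γ := I)] using
      sum_congr rfl fun y (_ : y ∈ univ) => hρ.sum_dim_mul_trace 1 y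
  obtain ⟨i, -, hi⟩ := exists_ne_zero_of_sum_ne_zero
    (hsum ▸ Nat.cast_ne_zero.mpr Fintype.card_ne_zero)
  have hne : ∑ x, (ρ i x : Matrix (Fin (d i)) (Fin (d i)) ℂ) ≠ 0 := by
    rintro h; simp [h] at hi
  have := (hρ.irred i).dim_le_one_of_forall_coe_eq_one
    ((hρ.irred i).coe_eq_one_of_sum_ne_zero hne)
  exact ⟨i, le_antisymm this (hρ.dim_pos i)⟩

end IsCompleteIrrepFamily

section MassBound

variable {I : Type*} [Fintype I] {d : I → ℕ} {S : I → ℝ} {t η : ℝ}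

lemma dim_mul_le_of_sum_eq (hS : ∀ i, 0 ≤ S i) (hmass : ∑ i, (d i : ℝ) * S i = t) (i : I) :
    d i * S i ≤ t :=
  hmass ▸ single_le_sum (fun k _ => mul_nonneg (Nat.cast_nonneg _) (hS k)) (mem_univ i)

lemma exists_lt_and_sub_div_le (ht : 0 < t) (hS : ∀ i, 0 ≤ S i)
    (hmass : ∑ i, (d i : ℝ) * S i = t) (hη : η * t ≤ ∑ i, (d i : ℝ) * S i ^ 2) {D : ℕ}
    (hlow : ∃ i, d i < D) : ∃ i, d i < D ∧ η - t / D ≤ S i := by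
  obtain ⟨j, hj, hmax⟩ := (univ.filter fun i => d i < D).exists_max_image S
    (by simpa [Finset.Nonempty] using hlow)
  rw [mem_filter] at hj
  refine ⟨j, hj.2, ?_⟩
  have hD : (0 : ℝ) < D := by exact_mod_cast (Nat.zero_le _).trans_lt hj.2
  have hbound : ∀ i, S i ≤ S j + t / D := by
    intro i
    by_cases hi : d i < D
    · exact (hmax i (by simp [hi])).trans (le_add_of_nonneg_right (by positivity))
    · have hDS : D * S i ≤ t := (mul_le_mul_of_nonneg_right (by exact_mod_cast not_lt.mp hi)
        (hS i)).trans (dim_mul_le_of_sum_eq hS hmass i)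
      exact ((le_div_iff₀' hD).mpr hDS).trans (le_add_of_nonneg_left (hS j))
  have hηt : η * t ≤ (S j + t / D) * t := calc
    η * t ≤ ∑ i, (d i : ℝ) * S i ^ 2 := hη
    _ ≤ ∑ i, (d i : ℝ) * S i * (S j + t / D) := sum_le_sum fun i _ => by
      rw [sq, ← mul_assoc]
      exact mul_le_mul_of_nonneg_left (hbound i) (mul_nonneg (Nat.cast_nonneg _) (hS i))
    _ = (S j + t / D) * t := by rw [← sum_mul, hmass, mul_comm]
  linarith [le_of_mul_le_mul_right hηt ht]

lemma exists_lt_two_mul_div_and_half_le (ht : 0 < t) (hη : 0 < η) (hpos : ∀ i, 0 < d i)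
    (hS : ∀ i, 0 ≤ S i) (hmass : ∑ i, (d i : ℝ) * S i = t)
    (h : ∀ D : ℕ, 1 < D → ∃ i, d i < D ∧ η - t / D ≤ S i) :
    ∃ i, (d i : ℝ) < 2 * t / η ∧ η / 2 ≤ S i := by
  have hηt : η < 2 * t := by
    obtain ⟨i, -, hi⟩ := h 2 one_lt_two
    have hSi : S i ≤ t := (le_mul_of_one_le_left (hS i) (by exact_mod_cast hpos i)).trans
      (dim_mul_le_of_sum_eq hS hmass i)
    push_cast at hi
    linarith
  have hceil : 2 * t / η ≤ ⌈2 * t / η⌉₊ := Nat.le_ceil _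
  have hD : 1 < ⌈2 * t / η⌉₊ := by
    have : (1 : ℝ) < 2 * t / η := by rw [lt_div_iff₀ hη]; linarith
    exact_mod_cast this.trans_le hceil
  obtain ⟨i, hiD, hi⟩ := h _ hD
  refine ⟨i, ?_, ?_⟩
  · have hlt := Nat.ceil_lt_add_one (by positivity : 0 ≤ 2 * t / η)
    have hle : (d i : ℝ) + 1 ≤ ⌈2 * t / η⌉₊ := by exact_mod_cast hiD
    linarith
  · have : t / ⌈2 * t / η⌉₊ ≤ η / 2 := by
      rw [div_le_iff₀ (by positivity)]
      calc t = η / 2 * (2 * t / η) := by field_simp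
        _ ≤ η / 2 * ⌈2 * t / η⌉₊ := mul_le_mul_of_nonneg_left hceil (by positivity)
    linarith

end MassBound

theorem fourier_mass_low_dim {G : Type*} [Group G] [Fintype G] {t : ℕ} (ht : 0 < t)
    {I : Type*} [Fintype I] (d : I → ℕ) (ρ : ∀ i, G →* Matrix.unitaryGroup (Fin (d i)) ℂ)
    (hpos : ∀ i, 0 < d i) (hirr : ∀ i, IsIrred (ρ i))
    (hdisj : ∀ i j, i ≠ j → ∀ M : Matrix (Fin (d i)) (Fin (d j)) ℂ,
      (∀ g, (ρ i g : Matrix (Fin (d i)) (Fin (d i)) ℂ) * M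
          = M * (ρ j g : Matrix (Fin (d j)) (Fin (d j)) ℂ)) → M = 0)
    (hcomplete : ∑ i, (d i) ^ 2 = Fintype.card G)
    (f : G → Matrix (Fin t) (Fin t) ℂ)
    (hf : ∀ x, f x ∈ Matrix.unitaryGroup (Fin t) ℂ)
    (η : ℝ) (hη : 0 < η) (hU2 : η * t ≤ u2pow4 f) :
    (∀ D : ℕ, 1 < D → ∃ i, d i < D ∧
        η - (t : ℝ) / D ≤ hsNormSq (fourierMat f (ρ i))) ∧
    (∃ i, (d i : ℝ) < 2 * t / η ∧ η / 2 ≤ hsNormSq (fourierMat f (ρ i))) := by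
  have hρ : IsCompleteIrrepFamily ρ := ⟨hpos, hirr, hdisj, hcomplete⟩
  have ht' : (0 : ℝ) < t := by exact_mod_cast ht
  have hS : ∀ i, 0 ≤ hsNormSq (fourierMat f (ρ i)) := fun i => hsNormSq_nonneg _
  have hmass : ∑ i, (d i : ℝ) * hsNormSq (fourierMat f (ρ i)) = t := by
    rw [hρ.sum_dim_mul_hsNormSq_fourierMat, l2sq_of_mem_unitaryGroup hf]
  have hlow : ∀ D : ℕ, 1 < D → ∃ i, d i < D ∧
      η - (t : ℝ) / D ≤ hsNormSq (fourierMat f (ρ i)) := by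
    intro D hD
    obtain ⟨i₀, hi₀⟩ := hρ.exists_dim_eq_one
    exact exists_lt_and_sub_div_le ht' hS hmass (hU2.trans (hρ.u2pow4_le_sum_dim_mul_sq f))
      ⟨i₀, hi₀ ▸ hD⟩
  exact ⟨hlow, exists_lt_two_mul_div_and_half_le ht' hη hpos hS hmass hlow⟩
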